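/- arXiv:2201.09453 — 2 statements merged into one kernel-verified Lean document; each statement's English description precedes it below -/
import Mathlib

section
/- For all real parameters a > 0, b > 1, T > 0, every integer n ≥ 1, and every χ ∈ [s_{n−1}(b,T), s_n(b,T)], the integrated function satisfies G_{a,b,T}(χ) = (−1)^{n−1}·a·T·b^{n−1}·sin((χ − s_{n−1}(b,T))/(b^{n−1}·T)). -/
/-!
On `[s_m, s_{m+1}]` the function `N` is a single cosine arc of half-period `π b^m T`, so its
integral from `s_m` is the matching sine arc scaled by `b^m T`. Each full arc therefore integrates
to `sin π = 0`, `G` vanishes at every breakpoint, and on `[s_m, s_{m+1}]` it equals the integral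
of the `m`-th arc from `s_m`.
-/

open Real Filter Set

/-- Breakpoints `s_n(b,T) = T·π·(b^n − 1)/(b − 1)`. -/
noncomputable def brk (b T : ℝ) (n : ℕ) : ℝ := T * Real.pi * (b ^ n - 1) / (b - 1)

/-- Index of the segment containing `x ≥ 0`: the unique `m` with `s_m ≤ x < s_{m+1}`
(for `b > 1`, `T > 0`). -/
noncomputable def seg (b T x : ℝ) : ℕ := sInf {n : ℕ | x < brk b T (n + 1)}

/-- The saturated Nussbaum function `N_{a,b,T}`: on `[s_{n−1}, s_n)` (with `m = n − 1`)
it equals `(−1)^m·a·cos((χ − s_m)/(b^m·T))`, extended evenly to `χ < 0`. -/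
noncomputable def satN (a b T : ℝ) (χ : ℝ) : ℝ :=
  (-1 : ℝ) ^ (seg b T |χ|) * a *
    Real.cos ((|χ| - brk b T (seg b T |χ|)) / (b ^ (seg b T |χ|) * T))

/-- The integrated function `G_{a,b,T}(χ) = ∫_0^χ N_{a,b,T}(τ) dτ`. -/
noncomputable def satG (a b T : ℝ) (χ : ℝ) : ℝ := ∫ τ in (0:ℝ)..χ, satN a b T τ

open MeasureTheory

lemma brk_zero (b T : ℝ) : brk b T 0 = 0 := by simp [brk]

lemma brk_succ_sub {b : ℝ} (T : ℝ) (hb : b ≠ 1) (m : ℕ) :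
    brk b T (m + 1) - brk b T m = T * π * b ^ m := by
  rw [brk, brk, div_sub_div_same, div_eq_iff (sub_ne_zero.2 hb)]
  ring

lemma brk_strictMono {b T : ℝ} (hb : 1 < b) (hT : 0 < T) : StrictMono (brk b T) :=
  strictMono_nat_of_lt_succ fun m => by
    have := brk_succ_sub T hb.ne' m
    have : 0 < T * π * b ^ m := by positivity
    linarith

lemma brk_nonneg {b T : ℝ} (hb : 1 < b) (hT : 0 < T) (m : ℕ) : 0 ≤ brk b T m := by
  simpa [brk_zero] using (brk_strictMono hb hT).monotone m.zero_le

lemma seg_eq_of_mem_Ico {b T x : ℝ} (hmono : Monotone (brk b T)) {m : ℕ}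
    (hx : x ∈ Ico (brk b T m) (brk b T (m + 1))) : seg b T x = m := by
  have hm : m ∈ {n : ℕ | x < brk b T (n + 1)} := hx.2
  refine le_antisymm (Nat.sInf_le hm) (not_lt.1 fun hlt => ?_)
  have hseg : x < brk b T (seg b T x + 1) := Nat.sInf_mem ⟨m, hm⟩
  exact (hseg.trans_le (hmono (Nat.succ_le_of_lt hlt))).not_ge hx.1

noncomputable def satNArc (a b T : ℝ) (m : ℕ) (τ : ℝ) : ℝ :=
  (-1) ^ m * a * cos ((τ - brk b T m) / (b ^ m * T))

lemma continuous_satNArc (a b T : ℝ) (m : ℕ) : Continuous (satNArc a b T m) := by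
  unfold satNArc
  fun_prop

lemma integral_satNArc (a b T : ℝ) (m : ℕ) (hc : b ^ m * T ≠ 0) (x : ℝ) :
    ∫ τ in brk b T m..x, satNArc a b T m τ =
      (-1) ^ m * a * (b ^ m * T) * sin ((x - brk b T m) / (b ^ m * T)) := by
  simp only [satNArc]
  rw [intervalIntegral.integral_const_mul,
    intervalIntegral.integral_comp_sub_right (fun t => cos (t / (b ^ m * T))),
    intervalIntegral.integral_comp_div _ hc, integral_cos]
  simp only [sub_self, zero_div, sin_zero, sub_zero, smul_eq_mul]
  ring

section
variable {a b T : ℝ} (hb : 1 < b) (hT : 0 < T)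
include hb hT

lemma satN_eq_satNArc {m : ℕ} {x : ℝ} (hx : x ∈ Ico (brk b T m) (brk b T (m + 1))) :
    satN a b T x = satNArc a b T m x := by
  rw [satN, abs_of_nonneg ((brk_nonneg hb hT m).trans hx.1),
    seg_eq_of_mem_Ico (brk_strictMono hb hT).monotone hx, satNArc]

lemma satN_ae_eq_satNArc {m : ℕ} {x y : ℝ} (hx : x ∈ Icc (brk b T m) (brk b T (m + 1)))
    (hy : y ∈ Icc (brk b T m) (brk b T (m + 1))) :
    ∀ᵐ τ, τ ∈ uIoc x y → satN a b T τ = satNArc a b T m τ := by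
  filter_upwards [Measure.ae_ne _ (brk b T (m + 1))] with τ hτ hxy
  obtain ⟨h₁, h₂⟩ := uIcc_subset_Icc hx hy (uIoc_subset_uIcc hxy)
  exact satN_eq_satNArc hb hT ⟨h₁, h₂.lt_of_ne hτ⟩

lemma intervalIntegrable_satN_of_mem_Icc {m : ℕ} {x y : ℝ}
    (hx : x ∈ Icc (brk b T m) (brk b T (m + 1))) (hy : y ∈ Icc (brk b T m) (brk b T (m + 1))) :
    IntervalIntegrable (satN a b T) volume x y :=
  ((continuous_satNArc a b T m).intervalIntegrable x y).congr_ae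
    (EventuallyEq.symm <| (ae_restrict_iff' measurableSet_uIoc).2
      (satN_ae_eq_satNArc hb hT hx hy))

lemma integral_satN_of_mem_Icc {m : ℕ} {χ : ℝ}
    (hχ : χ ∈ Icc (brk b T m) (brk b T (m + 1))) :
    ∫ τ in brk b T m..χ, satN a b T τ =
      (-1) ^ m * a * (b ^ m * T) * sin ((χ - brk b T m) / (b ^ m * T)) := by
  have hm : brk b T m ∈ Icc (brk b T m) (brk b T (m + 1)) := ⟨le_rfl, hχ.1.trans hχ.2⟩
  rw [intervalIntegral.integral_congr_ae (satN_ae_eq_satNArc hb hT hm hχ),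
    integral_satNArc a b T m (by positivity)]

lemma integral_satN_brk_succ (m : ℕ) :
    ∫ τ in brk b T m..brk b T (m + 1), satN a b T τ = 0 := by
  have hle := (brk_strictMono hb hT).monotone m.le_succ
  have hπ : (brk b T (m + 1) - brk b T m) / (b ^ m * T) = π := by
    rw [brk_succ_sub T hb.ne']
    field_simp
  rw [integral_satN_of_mem_Icc hb hT ⟨hle, le_rfl⟩, hπ, sin_pi, mul_zero]

lemma intervalIntegrable_satN_brk (m : ℕ) :
    IntervalIntegrable (satN a b T) volume (brk b T m) (brk b T (m + 1)) :=
  have hle := (brk_strictMono hb hT).monotone m.le_succ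
  intervalIntegrable_satN_of_mem_Icc hb hT ⟨le_rfl, hle⟩ ⟨hle, le_rfl⟩

lemma satG_brk (n : ℕ) : satG a b T (brk b T n) = 0 := by
  have hsum := intervalIntegral.sum_integral_adjacent_intervals (n := n)
    fun k _ => intervalIntegrable_satN_brk (a := a) hb hT k
  rw [brk_zero] at hsum
  rw [satG, ← hsum]
  exact Finset.sum_eq_zero fun k _ => integral_satN_brk_succ hb hT k

lemma satG_eq_of_mem_Icc {m : ℕ} {χ : ℝ} (hχ : χ ∈ Icc (brk b T m) (brk b T (m + 1))) :
    satG a b T χ = (-1) ^ m * a * (b ^ m * T) * sin ((χ - brk b T m) / (b ^ m * T)) := by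
  have h₀ : IntervalIntegrable (satN a b T) volume 0 (brk b T m) := by
    simpa only [brk_zero] using
      IntervalIntegrable.trans_iterate fun k _ => intervalIntegrable_satN_brk (a := a) hb hT k
  have hm : brk b T m ∈ Icc (brk b T m) (brk b T (m + 1)) := ⟨le_rfl, hχ.1.trans hχ.2⟩
  rw [satG, ← intervalIntegral.integral_add_adjacent_intervals h₀
      (intervalIntegrable_satN_of_mem_Icc hb hT hm hχ), ← satG, satG_brk hb hT, zero_add,
    integral_satN_of_mem_Icc hb hT hχ]

end

theorem satG_formula_general (a b T : ℝ) (hb : 1 < b) (hT : 0 < T)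
    (n : ℕ) (χ : ℝ) (hχ : χ ∈ Set.Icc (brk b T (n - 1)) (brk b T n)) :
    satG a b T χ =
      (-1 : ℝ) ^ (n - 1) * a * T * b ^ (n - 1) *
        Real.sin ((χ - brk b T (n - 1)) / (b ^ (n - 1) * T)) := by
  have hχ' : χ ∈ Icc (brk b T (n - 1)) (brk b T (n - 1 + 1)) :=
    ⟨hχ.1, hχ.2.trans ((brk_strictMono hb hT).monotone (by omega))⟩
  rw [satG_eq_of_mem_Icc hb hT hχ']
  ring

/-- explicit formula for `G_{a,b,T}` on `[s_{n−1}, s_n]`, `n ≥ 1`. -/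
theorem satG_formula (a b T : ℝ) (ha : 0 < a) (hb : 1 < b) (hT : 0 < T)
    (n : ℕ) (hn : 1 ≤ n) (χ : ℝ) (hχ : χ ∈ Set.Icc (brk b T (n - 1)) (brk b T n)) :
    satG a b T χ =
      (-1 : ℝ) ^ (n - 1) * a * T * b ^ (n - 1) *
        Real.sin ((χ - brk b T (n - 1)) / (b ^ (n - 1) * T)) :=
  satG_formula_general a b T hb hT n χ hχ
end

section
/- Suppose (a₁,b₁,T₁) and (a₂,b₂,T₂) are 4-chained. Then for every integer k ≥ 1: s_{2k−1}(b₁,T₁) + T₁·b₁^{2k−1}·arcsin(1/(2b₂²)) < s_{8k−3}(b₂,T₂) + (π/6)·T₂·b₂^{8k−3} and s_{2k}(b₁,T₁) − T₁·b₁^{2k−1}·arcsin(1/(2b₂²)) > s_{8k−2}(b₂,T₂) − (π/6)·T₂·b₂^{8k−3}. -/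
open Real Filter Set

/-- Two triples `(a₁,b₁,T₁)`, `(a₂,b₂,T₂)` are 4-chained. -/
def Chained4 (a₁ b₁ T₁ a₂ b₂ T₂ : ℝ) : Prop :=
  0 < a₂ ∧ 1 < b₂ ∧ 0 < T₂ ∧
    b₁ = b₂ ^ 4 ∧ a₁ = (b₂ ^ 3 / (1 + b₂ + b₂ ^ 2 + b₂ ^ 3)) * a₂ ∧
    T₁ = (1 + b₂ + b₂ ^ 2 + b₂ ^ 3) * T₂

/-!
Since `b₂⁴ - 1 = (b₂ - 1)(1 + b₂ + b₂² + b₂³)`, the breakpoints `s_n(b₁,T₁)` are the breakpoints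
`s_{4n}(b₂,T₂)`, and `T₁ b₁ⁿ = (1 + b₂ + b₂² + b₂³) T₂ b₂^{4n}`. Both inequalities thus compare
`(1 + b₂ + b₂² + b₂³) arcsin(1/(2b₂²))` with `π (1 + b₂/6)` (the first) or `π (b₂² + b₂³ + b₂/6)`
(the second), in units of `T₂ b₂^{4n}`. Concavity of `sin` on `[0, π/6]` gives
`arcsin x ≤ (π/3) x` for `0 ≤ x ≤ 1/2`, which reduces the first comparison to `1 + b₂ < 5 b₂²`;
the second then follows from `1 ≤ b₂² + b₂³`.
-/

theorem Real.sin_div_mul_le_sin {x y : ℝ} (hx : 0 ≤ x) (hxy : x ≤ y) (hy : y ≤ π) :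
    sin y / y * x ≤ sin x := by
  rcases hx.eq_or_lt with rfl | hx
  · simp
  have hy0 : 0 < y := hx.trans_le hxy
  have := strictConcaveOn_sin_Icc.concaveOn.2 (x := 0) (y := y) ⟨le_rfl, pi_pos.le⟩
    ⟨hy0.le, hy⟩ (sub_nonneg.2 ((div_le_one hy0).2 hxy)) (div_nonneg hx.le hy0.le) (by ring)
  simp only [smul_eq_mul, mul_zero, zero_add, sin_zero, div_mul_cancel₀ x hy0.ne'] at this
  linarith [div_mul_comm (sin y) y x]

theorem Real.arcsin_le_pi_div_three_mul {x : ℝ} (hx : 0 ≤ x) (hx' : x ≤ 1 / 2) :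
    arcsin x ≤ π / 3 * x := by
  have h := sin_div_mul_le_sin (y := π / 6) (arcsin_nonneg.2 hx) ?_ (by linarith [pi_pos])
  · rw [sin_pi_div_six, sin_arcsin (by linarith) (by linarith)] at h
    have : 1 / 2 / (π / 6) = 3 / π := by field_simp; norm_num
    rw [this, div_mul_eq_mul_div, div_le_iff₀ pi_pos] at h
    linarith
  · calc arcsin x ≤ arcsin (1 / 2) := arcsin_le_arcsin hx'
      _ = π / 6 := by rw [← sin_pi_div_six, arcsin_sin] <;> linarith [pi_pos]

theorem geom_sum_four_mul_arcsin_lt {b : ℝ} (hb : 1 ≤ b) :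
    (1 + b + b ^ 2 + b ^ 3) * arcsin (1 / (2 * b ^ 2)) < π * (1 + b / 6) := by
  have hA := arcsin_le_pi_div_three_mul (x := 1 / (2 * b ^ 2)) (by positivity)
    (by rw [div_le_div_iff₀ (by positivity) two_pos]; nlinarith)
  calc (1 + b + b ^ 2 + b ^ 3) * arcsin (1 / (2 * b ^ 2))
      ≤ (1 + b + b ^ 2 + b ^ 3) * (π / 3 * (1 / (2 * b ^ 2))) := by gcongr
    _ = π * (1 + b / 6) - π * (5 * b ^ 2 - b - 1) / (6 * b ^ 2) := by field_simp; ring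
    _ < π * (1 + b / 6) := sub_lt_self _ (div_pos (mul_pos pi_pos (by nlinarith)) (by positivity))

theorem brk_succ {b : ℝ} (hb : b ≠ 1) (T : ℝ) (n : ℕ) :
    brk b T (n + 1) = brk b T n + T * π * b ^ n := by
  have := sub_ne_zero.2 hb
  unfold brk
  field_simp
  ring

theorem brk_pow_geom_sum_mul (b T : ℝ) (j n : ℕ) :
    brk (b ^ j) ((∑ i ∈ Finset.range j, b ^ i) * T) n = brk b T (j * n) := by
  have hgeom : b ^ j - 1 = (∑ i ∈ Finset.range j, b ^ i) * (b - 1) := (geom_sum_mul b j).symm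
  unfold brk
  rw [pow_mul, hgeom]
  by_cases hS : ∑ i ∈ Finset.range j, b ^ i = 0
  · have : b ^ j = 1 := by linear_combination hgeom + (b - 1) * hS
    simp [hS, this]
  · simp only [mul_assoc]
    exact mul_div_mul_left _ _ hS

theorem Chained4.segment_comparison {a₁ b₁ T₁ a₂ b₂ T₂ : ℝ} (h : Chained4 a₁ b₁ T₁ a₂ b₂ T₂)
    (i : ℕ) :
    brk b₁ T₁ i + T₁ * b₁ ^ i * arcsin (1 / (2 * b₂ ^ 2)) <
      brk b₂ T₂ (4 * i + 1) + π / 6 * T₂ * b₂ ^ (4 * i + 1) ∧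
    brk b₂ T₂ (4 * i + 2) - π / 6 * T₂ * b₂ ^ (4 * i + 1) <
      brk b₁ T₁ (i + 1) - T₁ * b₁ ^ i * arcsin (1 / (2 * b₂ ^ 2)) := by
  obtain ⟨-, hb, hT, rfl, -, rfl⟩ := h
  have hcoarse (n : ℕ) : brk (b₂ ^ 4) ((1 + b₂ + b₂ ^ 2 + b₂ ^ 3) * T₂) n = brk b₂ T₂ (4 * n) := by
    simpa [Finset.sum_range_succ, add_assoc] using brk_pow_geom_sum_mul b₂ T₂ 4 n
  rw [hcoarse, hcoarse, ← pow_mul, mul_add, mul_one]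
  simp only [brk_succ hb.ne', pow_succ b₂ (4 * i)]
  have key := mul_lt_mul_of_pos_left (geom_sum_four_mul_arcsin_lt hb.le)
    (by positivity : 0 < T₂ * b₂ ^ (4 * i))
  have hgap : 0 ≤ T₂ * b₂ ^ (4 * i) * π * (b₂ ^ 2 + b₂ ^ 3 - 1) :=
    mul_nonneg (by positivity) (by nlinarith)
  constructor
  · linear_combination key
  · linear_combination key + hgap

/-- endpoint comparisons between the slow and fast Nussbaum segments. -/
theorem chained_endpoint_comparison (a₁ b₁ T₁ a₂ b₂ T₂ : ℝ)
    (h : Chained4 a₁ b₁ T₁ a₂ b₂ T₂) (k : ℕ) (hk : 1 ≤ k) :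
    brk b₁ T₁ (2 * k - 1) + T₁ * b₁ ^ (2 * k - 1) * Real.arcsin (1 / (2 * b₂ ^ 2)) <
      brk b₂ T₂ (8 * k - 3) + (Real.pi / 6) * T₂ * b₂ ^ (8 * k - 3) ∧
    brk b₂ T₂ (8 * k - 2) - (Real.pi / 6) * T₂ * b₂ ^ (8 * k - 3) <
      brk b₁ T₁ (2 * k) - T₁ * b₁ ^ (2 * k - 1) * Real.arcsin (1 / (2 * b₂ ^ 2)) := by
  have h₁ : 4 * (2 * k - 1) + 1 = 8 * k - 3 := by omega
  have h₂ : 4 * (2 * k - 1) + 2 = 8 * k - 2 := by omega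
  have h₃ : 2 * k - 1 + 1 = 2 * k := by omega
  simpa only [h₁, h₂, h₃] using h.segment_comparison (2 * k - 1)
end
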